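/- arXiv:1312.7039 — 4 statements merged into one kernel-verified Lean document; each statement's English description precedes it below -/
import Mathlib

section
/- Let x*, d* ∈ ℝ^p satisfy the KKT system ΨᵗΨx* + d* = Ψᵗy and x* = T_λ(x* + d*). Then x* is a global minimizer of the functional f(x) = ½‖Ψx − y‖₂² + λ‖x‖₁ over ℝ^p. -/
/-!
Both terms of `f` lie above their linearisations at `x*`. For the smooth part,
`½‖Ψx − y‖² ≥ ½‖Ψx* − y‖² + ⟨Ψᵀ(Ψx* − y), x − x*⟩`, and the first KKT equation says that
this gradient is `−d*`. For the `ℓ¹` part, the second KKT equation says that `d*` is a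
subgradient of `λ‖·‖₁` at `x*`: soft-thresholding `z` moves each coordinate by at most `λ`,
and in the direction of the sign of its output. Adding the two inequalities, the linear
terms cancel.
-/

open Matrix

/-- Componentwise soft-thresholding operator `T_λ(z)_i = max(|z_i| − λ, 0) · sign(z_i)`. -/
noncomputable def softThreshold {p : ℕ} (lam : ℝ) (z : Fin p → ℝ) : Fin p → ℝ :=
  fun i => max (|z i| - lam) 0 * Real.sign (z i)

noncomputable def scalarSoftThreshold (lam z : ℝ) : ℝ :=
  max (|z| - lam) 0 * Real.sign z

lemma softThreshold_apply {p : ℕ} (lam : ℝ) (z : Fin p → ℝ) (i : Fin p) :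
    softThreshold lam z i = scalarSoftThreshold lam (z i) :=
  rfl

lemma abs_sub_scalarSoftThreshold_le_and_mul_eq {lam : ℝ} (hlam : 0 ≤ lam) (z : ℝ) :
    |z - scalarSoftThreshold lam z| ≤ lam ∧
      (z - scalarSoftThreshold lam z) * scalarSoftThreshold lam z =
        lam * |scalarSoftThreshold lam z| := by
  unfold scalarSoftThreshold
  rcases le_or_gt |z| lam with hz | hz
  · simp [hz]
  · rw [max_eq_left (sub_nonneg.2 hz.le)]
    rcases lt_trichotomy z 0 with hneg | rfl | hpos
    · rw [abs_of_neg hneg] at hz ⊢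
      rw [Real.sign_of_neg hneg, abs_of_neg (by linarith : (-z - lam) * -1 < 0)]
      constructor
      · rw [show z - (-z - lam) * -1 = -lam by ring, abs_neg, abs_of_nonneg hlam]
      · ring
    · rw [abs_zero] at hz; linarith
    · rw [abs_of_pos hpos] at hz ⊢
      rw [Real.sign_of_pos hpos, mul_one, abs_of_pos (by linarith : 0 < z - lam)]
      constructor
      · rw [show z - (z - lam) = lam by ring, abs_of_nonneg hlam]
      · ring

lemma mul_abs_scalarSoftThreshold_add_le {lam : ℝ} (hlam : 0 ≤ lam) (z v : ℝ) :
    lam * |scalarSoftThreshold lam z| +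
        (z - scalarSoftThreshold lam z) * (v - scalarSoftThreshold lam z) ≤ lam * |v| := by
  set s := scalarSoftThreshold lam z
  obtain ⟨hbound, hcompl⟩ := abs_sub_scalarSoftThreshold_le_and_mul_eq hlam z
  calc lam * |s| + (z - s) * (v - s) = (z - s) * v := by rw [mul_sub, hcompl]; ring
    _ ≤ |z - s| * |v| := (le_abs_self _).trans (abs_mul _ _).le
    _ ≤ lam * |v| := mul_le_mul_of_nonneg_right hbound (abs_nonneg v)

lemma l1_add_dotProduct_sub_softThreshold_le {p : ℕ} {lam : ℝ} (hlam : 0 ≤ lam)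
    (z v : Fin p → ℝ) :
    lam * ∑ i, |softThreshold lam z i| + (z - softThreshold lam z) ⬝ᵥ (v - softThreshold lam z) ≤
      lam * ∑ i, |v i| := by
  simp only [dotProduct, Finset.mul_sum, ← Finset.sum_add_distrib, Pi.sub_apply,
    softThreshold_apply]
  exact Finset.sum_le_sum fun i _ => mul_abs_scalarSoftThreshold_add_le hlam (z i) (v i)

lemma sum_sq_sub_add_dotProduct_le {m n : Type*} [Fintype m] [Fintype n]
    (A : Matrix m n ℝ) (y : m → ℝ) (x₀ x : n → ℝ) :
    (1 / 2) * ∑ k, ((A *ᵥ x₀ - y) k) ^ 2 + (Aᵀ *ᵥ (A *ᵥ x₀ - y)) ⬝ᵥ (x - x₀) ≤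
      (1 / 2) * ∑ k, ((A *ᵥ x - y) k) ^ 2 := by
  set u := A *ᵥ x₀ - y
  set w := A *ᵥ (x - x₀)
  have hres : A *ᵥ x - y = u + w := by simp only [u, w, mulVec_sub]; abel
  have hgrad : (Aᵀ *ᵥ u) ⬝ᵥ (x - x₀) = u ⬝ᵥ w := by
    rw [dotProduct_mulVec, mulVec_transpose]
  have hsq (v : m → ℝ) : ∑ k, v k ^ 2 = v ⬝ᵥ v := by simp only [dotProduct, sq]
  have hw : 0 ≤ w ⬝ᵥ w := Finset.sum_nonneg fun k _ => mul_self_nonneg (w k)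
  rw [hres, hgrad, hsq, hsq, add_dotProduct, dotProduct_add, dotProduct_add,
    dotProduct_comm w u]
  linarith

/-- if `(x*, d*)` satisfies the KKT system, then `x*` is a global minimizer
of `x ↦ ½‖Ψx − y‖₂² + λ‖x‖₁`. -/
theorem stmt_1 {n p : ℕ} (Ψ : Matrix (Fin n) (Fin p) ℝ) (y : Fin n → ℝ)
    (lam : ℝ) (hlam : 0 < lam) (xstar dstar : Fin p → ℝ)
    (hK1 : Ψᵀ *ᵥ (Ψ *ᵥ xstar) + dstar = Ψᵀ *ᵥ y)
    (hK2 : xstar = softThreshold lam (xstar + dstar)) :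
    ∀ x : Fin p → ℝ,
      (1 / 2) * ∑ k, ((Ψ *ᵥ xstar - y) k) ^ 2 + lam * ∑ i, |xstar i| ≤
        (1 / 2) * ∑ k, ((Ψ *ᵥ x - y) k) ^ 2 + lam * ∑ i, |x i| := by
  intro x
  have hgrad : Ψᵀ *ᵥ (Ψ *ᵥ xstar - y) = -dstar := by
    rw [mulVec_sub, ← hK1]; abel
  have hsmooth := sum_sq_sub_add_dotProduct_le Ψ y xstar x
  have hl1 := l1_add_dotProduct_sub_softThreshold_le hlam.le (xstar + dstar) x
  rw [← hK2, add_sub_cancel_left] at hl1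
  rw [hgrad, neg_dotProduct] at hsmooth
  linarith
end

section
/- In the noise-free setting, let A ⊆ A† with B = A†∖A, suppose Ψ satisfies RIP of order T+1 with constant δ < 1, let d ∈ ℝ^p have |d_i| = λ for all i ∈ A, and let x_A = (Ψ_AᵗΨ_A)⁻¹(Ψ_Aᵗ y − d_A). Then ‖x_A + d_A − x†_A‖₂ ≤ (δ/(1−δ))‖x†_B‖₂ + (δ/(1−δ))‖d_A‖₂. -/
/-!
Write `e = x_A + d_A - x†_A`. Since `y = Ψ_A x†_A + Ψ x†_B`, the normal equations
`Ψ_Aᵀ Ψ_A x_A = Ψ_Aᵀ y - d_A` give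
`‖Ψ_A e‖² = ⟪Ψ_A e, Ψ x†_B⟫ + (⟪Ψ_A e, Ψ_A d_A⟫ - ⟪e, d_A⟫)`.
By polarization, the RIP of order `T + 1` yields `⟪Ψu, Ψv⟫ - ⟪u, v⟫ ≤ δ ‖u‖ ‖v‖` for `u`, `v`
supported in `A†`, which bounds both terms on the right by `δ ‖e‖ ‖x†_B‖` and `δ ‖e‖ ‖d_A‖`,
while the left side is at least `(1 - δ) ‖e‖²`.
-/

open Matrix

/-- The submatrix `Ψ_A` of `Ψ` consisting of the columns indexed by `A`. -/
def colSub {n p : ℕ} (Ψ : Matrix (Fin n) (Fin p) ℝ) (A : Finset (Fin p)) :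
    Matrix (Fin n) {i // i ∈ A} ℝ :=
  Matrix.of fun i j => Ψ i j.1

/-- `Ψ` satisfies the restricted isometry property of order `k` with constant `δ`:
`(1 − δ)‖x‖₂² ≤ ‖Ψx‖₂² ≤ (1 + δ)‖x‖₂²` for all `x` with at most `k` nonzero entries. -/
def HasRIP {n p : ℕ} (Ψ : Matrix (Fin n) (Fin p) ℝ) (k : ℕ) (δ : ℝ) : Prop :=
  ∀ x : Fin p → ℝ, (Finset.univ.filter (fun i => x i ≠ 0)).card ≤ k →
    (1 - δ) * (∑ i, x i ^ 2) ≤ ∑ j, (Ψ *ᵥ x) j ^ 2 ∧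
      ∑ j, (Ψ *ᵥ x) j ^ 2 ≤ (1 + δ) * (∑ i, x i ^ 2)

open scoped RealInnerProductSpace

section NearIsometry

variable {E F : Type*} [NormedAddCommGroup E] [InnerProductSpace ℝ E]
  [NormedAddCommGroup F] [InnerProductSpace ℝ F]
  {L : E →ₗ[ℝ] F} {V : Submodule ℝ E} {δ : ℝ}

lemma inner_map_sub_inner_le_half
    (hL : ∀ z ∈ V, (1 - δ) * ‖z‖ ^ 2 ≤ ‖L z‖ ^ 2 ∧ ‖L z‖ ^ 2 ≤ (1 + δ) * ‖z‖ ^ 2)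
    {u v : E} (hu : u ∈ V) (hv : v ∈ V) :
    ⟪L u, L v⟫ - ⟪u, v⟫ ≤ δ / 2 * (‖u‖ ^ 2 + ‖v‖ ^ 2) := by
  have hadd := (hL (u + v) (V.add_mem hu hv)).2
  have hsub := (hL (u - v) (V.sub_mem hu hv)).1
  rw [map_add, norm_add_sq_real, norm_add_sq_real] at hadd
  rw [map_sub, norm_sub_sq_real, norm_sub_sq_real] at hsub
  linear_combination (hadd + hsub) / 4

lemma inner_map_sub_inner_le
    (hL : ∀ z ∈ V, (1 - δ) * ‖z‖ ^ 2 ≤ ‖L z‖ ^ 2 ∧ ‖L z‖ ^ 2 ≤ (1 + δ) * ‖z‖ ^ 2)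
    {u v : E} (hu : u ∈ V) (hv : v ∈ V) :
    ⟪L u, L v⟫ - ⟪u, v⟫ ≤ δ * ‖u‖ * ‖v‖ := by
  rcases eq_or_ne u 0 with rfl | hu0
  · simp
  rcases eq_or_ne v 0 with rfl | hv0
  · simp
  -- rescaling to `‖v‖ • u` and `‖u‖ • v` balances the two squares in the half-bound
  have h := inner_map_sub_inner_le_half hL (V.smul_mem ‖v‖ hu) (V.smul_mem ‖u‖ hv)
  simp only [map_smul, real_inner_smul_left, real_inner_smul_right, norm_smul, Real.norm_eq_abs,
    abs_norm] at h
  have huv : 0 < ‖u‖ * ‖v‖ := by positivity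
  nlinarith

end NearIsometry

def EuclideanSpace.supportedOn {ι : Type*} (S : Set ι) : Submodule ℝ (EuclideanSpace ℝ ι) where
  carrier := {x | ∀ i ∉ S, x i = 0}
  add_mem' hx hy i hi := by simp [hx i hi, hy i hi]
  zero_mem' _ _ := rfl
  smul_mem' c x hx i hi := by simp [hx i hi]

section ExtendByZero

variable {ι : Type*} [DecidableEq ι] {A : Finset ι}

def extendByZero (A : Finset ι) (u : A → ℝ) : ι → ℝ :=
  fun i => if h : i ∈ A then u ⟨i, h⟩ else 0

@[simp]
lemma extendByZero_apply_coe (u : A → ℝ) (j : A) : extendByZero A u j = u j := by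
  simp [extendByZero]

lemma extendByZero_apply_of_notMem (u : A → ℝ) {i : ι} (hi : i ∉ A) :
    extendByZero A u i = 0 := by
  simp [extendByZero, hi]

lemma sum_extendByZero [Fintype ι] {g : ι → ℝ → ℝ} (hg : ∀ i, g i 0 = 0) (u : A → ℝ) :
    ∑ i, g i (extendByZero A u i) = ∑ j : A, g j (u j) := by
  rw [← Finset.sum_subset (Finset.subset_univ A) fun i _ hi => by
    rw [extendByZero_apply_of_notMem u hi, hg], ← Finset.sum_coe_sort A]
  simp

lemma extendByZero_dotProduct [Fintype ι] (u : A → ℝ) (w : ι → ℝ) :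
    extendByZero A u ⬝ᵥ w = u ⬝ᵥ fun j => w j :=
  sum_extendByZero (g := fun i t => t * w i) (fun _ => zero_mul _) u

lemma extendByZero_dotProduct_extendByZero [Fintype ι] (u v : A → ℝ) :
    extendByZero A u ⬝ᵥ extendByZero A v = u ⬝ᵥ v := by
  simp [extendByZero_dotProduct]

lemma sum_extendByZero_sq [Fintype ι] (u : A → ℝ) : ∑ i, extendByZero A u i ^ 2 = ∑ j, u j ^ 2 :=
  sum_extendByZero (fun _ => zero_pow two_ne_zero) u

lemma eq_extendByZero_add_extendByZero {B : Finset ι} (hAB : Disjoint A B) {x : ι → ℝ}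
    (hx : ∀ i ∉ A ∪ B, x i = 0) :
    x = extendByZero A (fun j => x j) + extendByZero B (fun j => x j) := by
  funext i
  by_cases hiA : i ∈ A
  · simp [extendByZero, hiA, Finset.disjoint_left.1 hAB hiA]
  by_cases hiB : i ∈ B
  · simp [extendByZero, hiA, hiB]
  · simp [extendByZero, hiA, hiB, hx i (by simp [hiA, hiB])]

end ExtendByZero

lemma dotProduct_self_eq_sum_sq {m : Type*} [Fintype m] (v : m → ℝ) : v ⬝ᵥ v = ∑ i, v i ^ 2 := by
  simp [dotProduct, sq]

lemma mulVec_extendByZero {n p : ℕ} (Ψ : Matrix (Fin n) (Fin p) ℝ) (A : Finset (Fin p))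
    (u : A → ℝ) : Ψ *ᵥ extendByZero A u = colSub Ψ A *ᵥ u := by
  ext i
  exact sum_extendByZero (fun _ => mul_zero _) u

lemma mulVec_eq_colSub_add_colSub {n p : ℕ} (Ψ : Matrix (Fin n) (Fin p) ℝ)
    {A B : Finset (Fin p)} (hAB : Disjoint A B) {x : Fin p → ℝ} (hx : ∀ i ∉ A ∪ B, x i = 0) :
    Ψ *ᵥ x = colSub Ψ A *ᵥ (fun j => x j) + colSub Ψ B *ᵥ (fun j => x j) := by
  rw [← mulVec_extendByZero, ← mulVec_extendByZero, ← mulVec_add,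
    ← eq_extendByZero_add_extendByZero hAB hx]

lemma dotProduct_mulVec_self_of_normal_eq {m ι : Type*} [Fintype m] [Fintype ι]
    {M : Matrix m ι ℝ} {x x₀ d : ι → ℝ} {r : m → ℝ}
    (hx : Mᵀ *ᵥ (M *ᵥ x) = Mᵀ *ᵥ (M *ᵥ x₀ + r) - d) :
    (M *ᵥ (x + d - x₀)) ⬝ᵥ (M *ᵥ (x + d - x₀)) =
      (M *ᵥ (x + d - x₀)) ⬝ᵥ r + ((M *ᵥ (x + d - x₀)) ⬝ᵥ (M *ᵥ d) - (x + d - x₀) ⬝ᵥ d) := by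
  have hadj : ∀ (w : ι → ℝ) (v : m → ℝ), (M *ᵥ w) ⬝ᵥ v = w ⬝ᵥ (Mᵀ *ᵥ v) := fun w v => by
    rw [dotProduct_mulVec, vecMul_transpose]
  have hgrad : Mᵀ *ᵥ (M *ᵥ (x + d - x₀)) = Mᵀ *ᵥ r + (Mᵀ *ᵥ (M *ᵥ d) - d) := by
    rw [mulVec_sub, mulVec_add, mulVec_sub, mulVec_add, hx, mulVec_add]
    abel
  rw [hadj, hgrad, hadj, hadj, dotProduct_add, dotProduct_sub]

lemma transpose_mul_mulVec_inv_mulVec {m ι : Type*} [Fintype m] [Fintype ι] [DecidableEq ι]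
    {M : Matrix m ι ℝ} (hM : IsUnit (Mᵀ * M)) (v : ι → ℝ) :
    Mᵀ *ᵥ (M *ᵥ ((Mᵀ * M)⁻¹ *ᵥ v)) = v := by
  rw [mulVec_mulVec, mulVec_mulVec, mul_nonsing_inv _ (hM.map detMonoidHom), one_mulVec]

lemma le_div_one_sub_of_sq_le {a b δ : ℝ} (ha : 0 ≤ a) (hb : 0 ≤ b) (hδ : δ < 1)
    (h : (1 - δ) * a ^ 2 ≤ a * b) : a ≤ b / (1 - δ) := by
  rw [le_div_iff₀ (by linarith)]
  obtain rfl | hpos := ha.eq_or_lt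
  · simpa using hb
  · nlinarith

lemma card_filter_ne_zero_le {ι : Type*} [Fintype ι] {S : Finset ι}
    {x : ι → ℝ} (hx : ∀ i ∉ S, x i = 0) : (Finset.univ.filter fun i => x i ≠ 0).card ≤ S.card :=
  Finset.card_le_card fun i hi => by
    by_contra hiS
    exact (Finset.mem_filter.1 hi).2 (hx i hiS)

namespace HasRIP

variable {n p k : ℕ} {Ψ : Matrix (Fin n) (Fin p) ℝ} {δ : ℝ}

lemma dotProduct_mulVec_sub_le (h : HasRIP Ψ k δ) {S : Finset (Fin p)} (hS : S.card ≤ k)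
    {u v : Fin p → ℝ} (hu : ∀ i ∉ S, u i = 0) (hv : ∀ i ∉ S, v i = 0) :
    (Ψ *ᵥ u) ⬝ᵥ (Ψ *ᵥ v) - u ⬝ᵥ v ≤ δ * √(∑ i, u i ^ 2) * √(∑ i, v i ^ 2) := by
  have hL : ∀ z ∈ EuclideanSpace.supportedOn (S : Set (Fin p)),
      (1 - δ) * ‖z‖ ^ 2 ≤ ‖toEuclideanLin Ψ z‖ ^ 2 ∧
        ‖toEuclideanLin Ψ z‖ ^ 2 ≤ (1 + δ) * ‖z‖ ^ 2 := by
    intro z hz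
    simp only [EuclideanSpace.real_norm_sq_eq]
    exact h z.ofLp ((card_filter_ne_zero_le hz).trans hS)
  simpa [EuclideanSpace.norm_eq, EuclideanSpace.inner_toLp_toLp, dotProduct_comm] using
    inner_map_sub_inner_le hL (u := WithLp.toLp 2 u) (v := WithLp.toLp 2 v) hu hv

lemma one_sub_mul_sum_sq_le_dotProduct_colSub (h : HasRIP Ψ k δ) {A : Finset (Fin p)}
    (hA : A.card ≤ k) (u : A → ℝ) :
    (1 - δ) * ∑ j, u j ^ 2 ≤ (colSub Ψ A *ᵥ u) ⬝ᵥ (colSub Ψ A *ᵥ u) := by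
  rw [dotProduct_self_eq_sum_sq, ← sum_extendByZero_sq, ← mulVec_extendByZero]
  exact (h _ ((card_filter_ne_zero_le fun _ => extendByZero_apply_of_notMem u).trans hA)).1

lemma isUnit_transpose_mul_colSub (h : HasRIP Ψ k δ) (hδ : δ < 1) {A : Finset (Fin p)}
    (hA : A.card ≤ k) : IsUnit ((colSub Ψ A)ᵀ * colSub Ψ A) := by
  have hinj : Function.Injective (colSub Ψ A).mulVec := by
    intro u v huv
    have hle := h.one_sub_mul_sum_sq_le_dotProduct_colSub hA (u - v)
    rw [mulVec_sub, huv, sub_self, dotProduct_zero] at hle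
    have hsq : ∑ j, (u - v) j ^ 2 = 0 :=
      le_antisymm (nonpos_of_mul_nonpos_right hle (by linarith))
        (Finset.sum_nonneg fun _ _ => sq_nonneg _)
    rwa [← sub_eq_zero, ← dotProduct_self_eq_zero, dotProduct_self_eq_sum_sq]
  simpa using (PosDef.conjTranspose_mul_self _ hinj).isUnit

lemma colSub_dotProduct_sub_le (h : HasRIP Ψ k δ) {A : Finset (Fin p)} (hA : A.card ≤ k)
    (u v : A → ℝ) :
    (colSub Ψ A *ᵥ u) ⬝ᵥ (colSub Ψ A *ᵥ v) - u ⬝ᵥ v ≤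
      δ * √(∑ j, u j ^ 2) * √(∑ j, v j ^ 2) := by
  have h' := h.dotProduct_mulVec_sub_le hA (fun i => extendByZero_apply_of_notMem u)
    (fun i => extendByZero_apply_of_notMem v)
  rwa [mulVec_extendByZero, mulVec_extendByZero, extendByZero_dotProduct_extendByZero,
    sum_extendByZero_sq, sum_extendByZero_sq] at h'

lemma colSub_dotProduct_colSub_le (h : HasRIP Ψ k δ) {A B : Finset (Fin p)} (hAB : Disjoint A B)
    (hk : (A ∪ B).card ≤ k) (u : A → ℝ) (v : B → ℝ) :
    (colSub Ψ A *ᵥ u) ⬝ᵥ (colSub Ψ B *ᵥ v) ≤ δ * √(∑ j, u j ^ 2) * √(∑ j, v j ^ 2) := by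
  have h' := h.dotProduct_mulVec_sub_le hk
    (fun i hi => extendByZero_apply_of_notMem u fun hiA => hi (Finset.mem_union_left B hiA))
    (fun i hi => extendByZero_apply_of_notMem v fun hiB => hi (Finset.mem_union_right A hiB))
  have horth : (fun j : A => extendByZero B v j) = 0 :=
    funext fun j => extendByZero_apply_of_notMem v (Finset.disjoint_left.1 hAB j.2)
  rwa [mulVec_extendByZero, mulVec_extendByZero, extendByZero_dotProduct, horth, dotProduct_zero,
    sub_zero, sum_extendByZero_sq, sum_extendByZero_sq] at h'

end HasRIP

theorem stmt_8_general {n p : ℕ} (Ψ : Matrix (Fin n) (Fin p) ℝ)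
    (xdag : Fin p → ℝ) (Adag : Finset (Fin p))
    (hAdag : Adag = Finset.univ.filter (fun i => xdag i ≠ 0))
    (T : ℕ) (hT : T = Adag.card)
    (y : Fin n → ℝ) (hy : y = Ψ *ᵥ xdag)
    (δ : ℝ) (hδ0 : 0 < δ) (hδ1 : δ < 1)
    (hRIP : HasRIP Ψ (T + 1) δ)
    (A : Finset (Fin p)) (hA : A ⊆ Adag)
    (B : Finset (Fin p)) (hB : B = Adag \ A)
    (d : Fin p → ℝ)
    (xA : {i // i ∈ A} → ℝ)
    (hxA : xA = ((colSub Ψ A)ᵀ * colSub Ψ A)⁻¹ *ᵥ ((colSub Ψ A)ᵀ *ᵥ y - fun j => d j.1))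
 :
    Real.sqrt (∑ j : {i // i ∈ A}, (xA j + d j.1 - xdag j.1) ^ 2) ≤
      δ / (1 - δ) * Real.sqrt (∑ i ∈ B, xdag i ^ 2) +
        δ / (1 - δ) * Real.sqrt (∑ i ∈ A, d i ^ 2) := by
  set e : A → ℝ := xA + (fun j : A => d j) - fun j : A => xdag j
  have hAB : Disjoint A B := hB ▸ Finset.disjoint_sdiff
  have hAB_eq : A ∪ B = Adag := hB ▸ Finset.union_sdiff_of_subset hA
  have hAk : A.card ≤ T + 1 := hT ▸ (Finset.card_le_card hA).trans (Nat.le_succ _)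
  have hABk : (A ∪ B).card ≤ T + 1 := hAB_eq ▸ hT ▸ Nat.le_succ _
  have hsplit : colSub Ψ A *ᵥ (fun j => xdag j) + colSub Ψ B *ᵥ (fun j => xdag j) = y := by
    rw [hy, mulVec_eq_colSub_add_colSub Ψ hAB fun i hi => by simpa [hAB_eq, hAdag] using hi]
  have hid : (colSub Ψ A *ᵥ e) ⬝ᵥ (colSub Ψ A *ᵥ e) =
      (colSub Ψ A *ᵥ e) ⬝ᵥ (colSub Ψ B *ᵥ fun j => xdag j) +
        ((colSub Ψ A *ᵥ e) ⬝ᵥ (colSub Ψ A *ᵥ fun j => d j) - e ⬝ᵥ fun j => d j) := by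
    refine dotProduct_mulVec_self_of_normal_eq ?_
    rw [hsplit, hxA, transpose_mul_mulVec_inv_mulVec (hRIP.isUnit_transpose_mul_colSub hδ1 hAk)]
  have hlow := hRIP.one_sub_mul_sum_sq_le_dotProduct_colSub hAk e
  have hcross := hRIP.colSub_dotProduct_colSub_le hAB hABk e fun j => xdag j
  have hdiag := hRIP.colSub_dotProduct_sub_le hAk e fun j => d j
  rw [Finset.sum_coe_sort B fun i => xdag i ^ 2] at hcross
  rw [Finset.sum_coe_sort A fun i => d i ^ 2] at hdiag
  calc √(∑ j, e j ^ 2)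
      ≤ (δ * √(∑ i ∈ B, xdag i ^ 2) + δ * √(∑ i ∈ A, d i ^ 2)) / (1 - δ) := by
        refine le_div_one_sub_of_sq_le (Real.sqrt_nonneg _) (by positivity) hδ1 ?_
        rw [Real.sq_sqrt (by positivity)]
        linear_combination hlow + hid + hcross + hdiag
    _ = _ := by ring

/-- error bound on the active set after one Newton step (noise-free setting). -/
theorem stmt_8 {n p : ℕ} (Ψ : Matrix (Fin n) (Fin p) ℝ)
    (xdag : Fin p → ℝ) (Adag : Finset (Fin p))
    (hAdag : Adag = Finset.univ.filter (fun i => xdag i ≠ 0))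
    (T : ℕ) (hT : T = Adag.card)
    (y : Fin n → ℝ) (hy : y = Ψ *ᵥ xdag)
    (δ : ℝ) (hδ0 : 0 < δ) (hδ1 : δ < 1)
    (hRIP : HasRIP Ψ (T + 1) δ)
    (lam : ℝ) (hlam : 0 < lam)
    (A : Finset (Fin p)) (hA : A ⊆ Adag)
    (B : Finset (Fin p)) (hB : B = Adag \ A)
    (d : Fin p → ℝ) (hdA : ∀ i ∈ A, |d i| = lam)
    (xA : {i // i ∈ A} → ℝ)
    (hxA : xA = ((colSub Ψ A)ᵀ * colSub Ψ A)⁻¹ *ᵥ ((colSub Ψ A)ᵀ *ᵥ y - fun j => d j.1))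
 :
    Real.sqrt (∑ j : {i // i ∈ A}, (xA j + d j.1 - xdag j.1) ^ 2) ≤
      δ / (1 - δ) * Real.sqrt (∑ i ∈ B, xdag i ^ 2) +
        δ / (1 - δ) * Real.sqrt (∑ i ∈ A, d i ^ 2) :=
  stmt_8_general Ψ xdag Adag hAdag T hT y hy δ hδ0 hδ1 hRIP A hA B hB d xA hxA
end

section
/- In the noise-free setting, let A ⊊ A† with B = A†∖A, suppose Ψ satisfies RIP of order T+1 with constant δ < 1, let d ∈ ℝ^p have |d_i| = λ for all i ∈ A, let x_A = (Ψ_AᵗΨ_A)⁻¹(Ψ_Aᵗ y − d_A), and define d_i = Ψ_iᵗ(y − Ψ_A x_A) for i ∉ A. Let i_A be an index maximizing |x†_i| over i ∈ A^c (so i_A ∈ B). Then |d_{i_A}| ≥ |x†_{i_A}| − (δ/(1−δ))(‖x†_B‖₂ + ‖d_A‖₂). -/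
open Matrix

/-!
Put `u = x† − x_A`, with `x_A` extended by zero. The normal equations defining `x_A`, together
with the definition of `d` off `A`, say exactly that `d = ΨᵀΨu`, and `u` is supported on `A†`.
On vectors with such supports, RIP of order `T + 1` makes `ΨᵀΨ` `δ`-close to the identity in the
bilinear sense `|⟨Ψv, Ψw⟩ − ⟨v, w⟩| ≤ δ‖v‖‖w‖`. Testing against `e_{i_A}` gives
`|d_{i_A} − x†_{i_A}| ≤ δ‖u‖`; testing against `u_A` and using Cauchy–Schwarz gives
`‖u_A‖ ≤ ‖d_A‖ + δ‖u‖`, hence `(1 − δ)‖u‖ ≤ ‖x†_B‖ + ‖d_A‖`.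
-/

theorem dotProduct_transpose_mulVec_mulVec {m ι R : Type*} [Fintype m] [Fintype ι] [CommSemiring R]
    (M : Matrix m ι R) (v w : ι → R) : v ⬝ᵥ (Mᵀ *ᵥ (M *ᵥ w)) = (M *ᵥ v) ⬝ᵥ (M *ᵥ w) := by
  rw [dotProduct_mulVec, vecMul_transpose]

theorem transpose_mulVec_sub_mulVec_of_eq_inv_mulVec {m ι R : Type*} [Fintype m] [Fintype ι]
    [DecidableEq ι] [CommRing R] {M : Matrix m ι R} (hM : IsUnit (Mᵀ * M).det) {y : m → R}
    {r x : ι → R} (hx : x = (Mᵀ * M)⁻¹ *ᵥ (Mᵀ *ᵥ y - r)) :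
    Mᵀ *ᵥ (y - M *ᵥ x) = r := by
  rw [mulVec_sub, mulVec_mulVec, hx, mulVec_mulVec, mul_nonsing_inv _ hM, one_mulVec,
    sub_sub_cancel]

theorem extend_subtypeVal_apply_of_not {α β : Type*} [Zero β] {P : α → Prop}
    (z : Subtype P → β) {i : α} (hi : ¬ P i) : Function.extend Subtype.val z 0 i = 0 :=
  Function.extend_apply' _ _ _ fun ⟨a, ha⟩ => hi (ha ▸ a.2)

theorem dotProduct_self_nonneg {ι : Type*} [Fintype ι] (x : ι → ℝ) : 0 ≤ x ⬝ᵥ x :=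
  Finset.sum_nonneg fun i _ => mul_self_nonneg (x i)

theorem colSub_mulVec {n p : ℕ} (Ψ : Matrix (Fin n) (Fin p) ℝ) (A : Finset (Fin p))
    (z : {i // i ∈ A} → ℝ) :
    colSub Ψ A *ᵥ z = Ψ *ᵥ Function.extend Subtype.val z 0 := by
  ext j
  rw [mulVec, mulVec, dotProduct, dotProduct,
    ← Finset.sum_subset A.subset_univ fun i _ hi => by
      rw [extend_subtypeVal_apply_of_not z hi, mul_zero],
    ← Finset.sum_coe_sort A]
  simp [colSub]

namespace HasRIP

variable {n p k : ℕ} {Ψ : Matrix (Fin n) (Fin p) ℝ} {δ : ℝ}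

theorem dotProduct_bounds (h : HasRIP Ψ k δ) {S : Finset (Fin p)} (hS : S.card ≤ k)
    {x : Fin p → ℝ} (hx : ∀ i ∉ S, x i = 0) :
    (1 - δ) * (x ⬝ᵥ x) ≤ (Ψ *ᵥ x) ⬝ᵥ (Ψ *ᵥ x) ∧ (Ψ *ᵥ x) ⬝ᵥ (Ψ *ᵥ x) ≤ (1 + δ) * (x ⬝ᵥ x) := by
  have hsupp : (Finset.univ.filter fun i => x i ≠ 0).card ≤ k :=
    (Finset.card_le_card fun i hi => by_contra fun hiS => by simp [hx i hiS] at hi).trans hS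
  simpa only [dotProduct, sq] using h x hsupp

theorem abs_dotProduct_sub_le_half (h : HasRIP Ψ k δ) {S : Finset (Fin p)} (hS : S.card ≤ k)
    {v w : Fin p → ℝ} (hv : ∀ i ∉ S, v i = 0) (hw : ∀ i ∉ S, w i = 0) :
    |(Ψ *ᵥ v) ⬝ᵥ (Ψ *ᵥ w) - v ⬝ᵥ w| ≤ δ / 2 * (v ⬝ᵥ v + w ⬝ᵥ w) := by
  have hadd := h.dotProduct_bounds hS (x := v + w) fun i hi => by simp [hv i hi, hw i hi]
  have hsub := h.dotProduct_bounds hS (x := v - w) fun i hi => by simp [hv i hi, hw i hi]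
  simp only [mulVec_add, mulVec_sub, add_dotProduct, dotProduct_add, sub_dotProduct,
    dotProduct_sub, dotProduct_comm w v, dotProduct_comm (Ψ *ᵥ w) (Ψ *ᵥ v)] at hadd hsub
  rw [abs_le]
  constructor <;> linarith [hadd.1, hadd.2, hsub.1, hsub.2]

theorem abs_dotProduct_sub_le (h : HasRIP Ψ k δ) {S : Finset (Fin p)} (hS : S.card ≤ k)
    {v w : Fin p → ℝ} (hv : ∀ i ∉ S, v i = 0) (hw : ∀ i ∉ S, w i = 0) :
    |(Ψ *ᵥ v) ⬝ᵥ (Ψ *ᵥ w) - v ⬝ᵥ w| ≤ δ * √(v ⬝ᵥ v) * √(w ⬝ᵥ w) := by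
  have hsq : ∀ x : Fin p → ℝ, √(x ⬝ᵥ x) ^ 2 = x ⬝ᵥ x := fun x =>
    Real.sq_sqrt (dotProduct_self_nonneg x)
  rcases (mul_nonneg (Real.sqrt_nonneg (v ⬝ᵥ v)) (Real.sqrt_nonneg (w ⬝ᵥ w))).eq_or_lt
    with hαβ | hαβ
  · obtain hα | hβ := mul_eq_zero.1 hαβ.symm
    · obtain rfl : v = 0 := by rw [← dotProduct_self_eq_zero, ← hsq, hα, sq, zero_mul]
      simp
    · obtain rfl : w = 0 := by rw [← dotProduct_self_eq_zero, ← hsq, hβ, sq, zero_mul]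
      simp
  -- rescaling to `(‖w‖ v, ‖v‖ w)` makes both squared norms equal to `‖v‖²‖w‖²`
  have key := h.abs_dotProduct_sub_le_half hS (v := √(w ⬝ᵥ w) • v) (w := √(v ⬝ᵥ v) • w)
    (fun i hi => by simp [hv i hi]) (fun i hi => by simp [hw i hi])
  simp only [mulVec_smul, smul_dotProduct, dotProduct_smul, smul_eq_mul, ← mul_sub,
    abs_mul, abs_of_nonneg (Real.sqrt_nonneg _)] at key
  have hv2 := hsq v
  have hw2 := hsq w
  generalize √(v ⬝ᵥ v) = α at *
  generalize √(w ⬝ᵥ w) = β at *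
  rw [← hv2, ← hw2] at key
  refine le_of_mul_le_mul_left ?_ hαβ
  linarith

theorem abs_gram_apply_sub_le (h : HasRIP Ψ k δ) {S : Finset (Fin p)} (hS : S.card < k)
    {u : Fin p → ℝ} (hu : ∀ i ∉ S, u i = 0) (i : Fin p) :
    |(Ψᵀ *ᵥ (Ψ *ᵥ u)) i - u i| ≤ δ * √(u ⬝ᵥ u) := by
  have key := h.abs_dotProduct_sub_le (S := insert i S) ((S.card_insert_le i).trans hS)
    (v := Pi.single i 1) (w := u)
    (fun j hj => Pi.single_eq_of_ne (fun e : j = i => hj (e ▸ S.mem_insert_self i)) _)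
    (fun j hj => hu j fun hjS => hj (Finset.mem_insert_of_mem hjS))
  rwa [← dotProduct_transpose_mulVec_mulVec, single_one_dotProduct, single_one_dotProduct,
    single_one_dotProduct, Pi.single_eq_same, Real.sqrt_one, mul_one] at key

theorem sqrt_sum_sq_le_gram_add (h : HasRIP Ψ k δ) (hδ : 0 ≤ δ) {S : Finset (Fin p)}
    (hS : S.card ≤ k) {u : Fin p → ℝ} (hu : ∀ i ∉ S, u i = 0) (A : Finset (Fin p)) :
    √(∑ i ∈ A, u i ^ 2) ≤ √(∑ i ∈ A, (Ψᵀ *ᵥ (Ψ *ᵥ u)) i ^ 2) + δ * √(u ⬝ᵥ u) := by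
  set uA : Fin p → ℝ := fun i => if i ∈ A then u i else 0
  have hcross : ∀ x, uA ⬝ᵥ x = ∑ i ∈ A, u i * x i := fun x => by
    simp only [uA, dotProduct, ite_mul, zero_mul, Finset.sum_ite_mem_eq]
  have hself : uA ⬝ᵥ uA = ∑ i ∈ A, u i ^ 2 := by
    rw [hcross]
    exact Finset.sum_congr rfl fun i hi => by simp [uA, hi, sq]
  have key := h.abs_dotProduct_sub_le hS (v := uA) (w := u)
    (fun i hi => by simp [uA, hu i hi]) hu
  rw [← dotProduct_transpose_mulVec_mulVec, hcross, hcross, hself] at key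
  have hcs := Real.sum_mul_le_sqrt_mul_sqrt A u (Ψᵀ *ᵥ (Ψ *ᵥ u))
  have ha2 : √(∑ i ∈ A, u i ^ 2) ^ 2 = ∑ i ∈ A, u i * u i := by
    rw [Real.sq_sqrt (Finset.sum_nonneg fun i _ => sq_nonneg _)]
    simp only [sq]
  have ha0 := Real.sqrt_nonneg (∑ i ∈ A, u i ^ 2)
  generalize √(∑ i ∈ A, u i ^ 2) = a at *
  rcases ha0.eq_or_lt with rfl | ha
  · positivity
  refine le_of_mul_le_mul_left ?_ ha
  linarith [(abs_le.1 key).1]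

theorem one_sub_mul_sqrt_dotProduct_self_le (h : HasRIP Ψ k δ) (hδ : 0 ≤ δ)
    {S A : Finset (Fin p)} (hAS : A ⊆ S) (hS : S.card ≤ k) {u : Fin p → ℝ}
    (hu : ∀ i ∉ S, u i = 0) :
    (1 - δ) * √(u ⬝ᵥ u) ≤
      √(∑ i ∈ S \ A, u i ^ 2) + √(∑ i ∈ A, (Ψᵀ *ᵥ (Ψ *ᵥ u)) i ^ 2) := by
  have hsplit : u ⬝ᵥ u = ∑ i ∈ S \ A, u i ^ 2 + ∑ i ∈ A, u i ^ 2 := by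
    rw [Finset.sum_sdiff hAS, dotProduct,
      ← Finset.sum_subset S.subset_univ fun i _ hi => by simp [hu i hi]]
    simp only [sq]
  have htri : √(u ⬝ᵥ u) ≤ √(∑ i ∈ S \ A, u i ^ 2) + √(∑ i ∈ A, u i ^ 2) := by
    have hb := Real.sq_sqrt (Finset.sum_nonneg fun i (_ : i ∈ S \ A) => sq_nonneg (u i))
    have ha := Real.sq_sqrt (Finset.sum_nonneg fun i (_ : i ∈ A) => sq_nonneg (u i))
    rw [Real.sqrt_le_left (by positivity), hsplit]
    nlinarith [Real.sqrt_nonneg (∑ i ∈ S \ A, u i ^ 2), Real.sqrt_nonneg (∑ i ∈ A, u i ^ 2)]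
  linarith [h.sqrt_sum_sq_le_gram_add hδ hS hu A]

theorem abs_gram_apply_sub_le_of_subset (h : HasRIP Ψ k δ) (hδ0 : 0 ≤ δ) (hδ1 : δ < 1)
    {S A : Finset (Fin p)} (hAS : A ⊆ S) (hS : S.card < k) {u : Fin p → ℝ}
    (hu : ∀ i ∉ S, u i = 0) (i : Fin p) :
    |(Ψᵀ *ᵥ (Ψ *ᵥ u)) i - u i| ≤
      δ / (1 - δ) * (√(∑ j ∈ S \ A, u j ^ 2) + √(∑ j ∈ A, (Ψᵀ *ᵥ (Ψ *ᵥ u)) j ^ 2)) :=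
  calc |(Ψᵀ *ᵥ (Ψ *ᵥ u)) i - u i| ≤ δ * √(u ⬝ᵥ u) := h.abs_gram_apply_sub_le hS hu i
    _ = δ / (1 - δ) * ((1 - δ) * √(u ⬝ᵥ u)) := by field_simp [(sub_pos.2 hδ1).ne']
    _ ≤ _ := mul_le_mul_of_nonneg_left (h.one_sub_mul_sqrt_dotProduct_self_le hδ0 hAS hS.le hu)
      (div_nonneg hδ0 (sub_nonneg.2 hδ1.le))

theorem isUnit_det_gram_colSub (h : HasRIP Ψ k δ) (hδ : δ < 1) {A : Finset (Fin p)}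
    (hA : A.card ≤ k) :
    IsUnit ((colSub Ψ A)ᵀ * colSub Ψ A).det := by
  rw [isUnit_iff_ne_zero, Ne, ← exists_mulVec_eq_zero_iff]
  rintro ⟨z, hz0, hz⟩
  set x := Function.extend Subtype.val z (0 : Fin p → ℝ)
  have hx : ∀ i ∉ A, x i = 0 := fun i hi => extend_subtypeVal_apply_of_not z hi
  have hΨx : (Ψ *ᵥ x) ⬝ᵥ (Ψ *ᵥ x) = 0 := by
    rw [← colSub_mulVec, ← dotProduct_transpose_mulVec_mulVec, mulVec_mulVec, hz, dotProduct_zero]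
  have hx0 : x ⬝ᵥ x = 0 := by
    have := (h.dotProduct_bounds hA hx).1
    rw [hΨx] at this
    nlinarith [dotProduct_self_nonneg x]
  exact hz0 (funext fun j => (Subtype.val_injective.extend_apply z 0 j).symm.trans
    (congrFun (dotProduct_self_eq_zero.1 hx0) j.1))

end HasRIP

theorem stmt_10_general {n p : ℕ} (Ψ : Matrix (Fin n) (Fin p) ℝ)
    (xdag : Fin p → ℝ) (Adag : Finset (Fin p))
    (hAdag : Adag = Finset.univ.filter (fun i => xdag i ≠ 0))
    (T : ℕ) (hT : T = Adag.card)
    (y : Fin n → ℝ) (hy : y = Ψ *ᵥ xdag)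
    (δ : ℝ) (hδ0 : 0 < δ) (hδ1 : δ < 1)
    (hRIP : HasRIP Ψ (T + 1) δ)
    (A : Finset (Fin p)) (hA : A ⊂ Adag)
    (B : Finset (Fin p)) (hB : B = Adag \ A)
    (d : Fin p → ℝ)
    (xA : {i // i ∈ A} → ℝ)
    (hxA : xA = ((colSub Ψ A)ᵀ * colSub Ψ A)⁻¹ *ᵥ ((colSub Ψ A)ᵀ *ᵥ y - fun j => d j.1))
    (hdI : ∀ i ∉ A, d i = (Ψᵀ *ᵥ (y - colSub Ψ A *ᵥ xA)) i)
    (iA : Fin p) (hiA : iA ∉ A) :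
    |xdag iA| - δ / (1 - δ) * (Real.sqrt (∑ i ∈ B, xdag i ^ 2) + Real.sqrt (∑ i ∈ A, d i ^ 2))
      ≤ |d iA| := by
  subst hB
  set u := xdag - Function.extend Subtype.val xA 0
  have hu_compl : ∀ i ∉ A, u i = xdag i := fun i hi => by
    simp [u, extend_subtypeVal_apply_of_not xA hi]
  have hu : ∀ i ∉ Adag, u i = 0 := fun i hi => by
    rw [hu_compl i fun h => hi (hA.subset h)]
    by_contra h
    exact hi (hAdag ▸ by simp [h])
  have hAdag_card : Adag.card < T + 1 := hT ▸ Nat.lt_succ_self _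
  have hgram : Ψᵀ *ᵥ (Ψ *ᵥ u) = d := by
    have hnormal := transpose_mulVec_sub_mulVec_of_eq_inv_mulVec
      (hRIP.isUnit_det_gram_colSub hδ1 ((Finset.card_le_card hA.subset).trans hAdag_card.le)) hxA
    rw [mulVec_sub, ← colSub_mulVec, ← hy]
    ext i
    by_cases hi : i ∈ A
    · exact congrFun hnormal ⟨i, hi⟩
    · exact (hdI i hi).symm
  have key := hRIP.abs_gram_apply_sub_le_of_subset hδ0.le hδ1 hA.subset hAdag_card hu iA
  rw [hgram, hu_compl iA hiA,
    Finset.sum_congr rfl fun i hi => by rw [hu_compl i (Finset.mem_sdiff.1 hi).2]] at key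
  linarith [abs_sub_abs_le_abs_sub (xdag iA) (d iA), abs_sub_comm (d iA) (xdag iA)]

/-- lower bound on the dual variable at the largest missed component (noise-free setting). -/
theorem stmt_10 {n p : ℕ} (Ψ : Matrix (Fin n) (Fin p) ℝ)
    (xdag : Fin p → ℝ) (Adag : Finset (Fin p))
    (hAdag : Adag = Finset.univ.filter (fun i => xdag i ≠ 0))
    (T : ℕ) (hT : T = Adag.card)
    (y : Fin n → ℝ) (hy : y = Ψ *ᵥ xdag)
    (δ : ℝ) (hδ0 : 0 < δ) (hδ1 : δ < 1)
    (hRIP : HasRIP Ψ (T + 1) δ)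
    (lam : ℝ) (hlam : 0 < lam)
    (A : Finset (Fin p)) (hA : A ⊂ Adag)
    (B : Finset (Fin p)) (hB : B = Adag \ A)
    (d : Fin p → ℝ) (hdA : ∀ i ∈ A, |d i| = lam)
    (xA : {i // i ∈ A} → ℝ)
    (hxA : xA = ((colSub Ψ A)ᵀ * colSub Ψ A)⁻¹ *ᵥ ((colSub Ψ A)ᵀ *ᵥ y - fun j => d j.1))
    (hdI : ∀ i ∉ A, d i = (Ψᵀ *ᵥ (y - colSub Ψ A *ᵥ xA)) i)
    (iA : Fin p) (hiA : iA ∉ A) (hmax : ∀ j ∉ A, |xdag j| ≤ |xdag iA|) :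
    |xdag iA| - δ / (1 - δ) * (Real.sqrt (∑ i ∈ B, xdag i ^ 2) + Real.sqrt (∑ i ∈ A, d i ^ 2))
      ≤ |d iA| :=
  stmt_10_general Ψ xdag Adag hAdag T hT y hy δ hδ0 hδ1 hRIP A hA B hB d xA hxA hdI iA hiA
end

section
/- (Claim 1a.) In the noise-free setting under Assumption 1, let A ⊆ A† satisfy J_{λ,2} ⊆ A, let d ∈ ℝ^p have |d_i| = λ for all i ∈ A, let x ∈ ℝ^p be given by x_i = 0 for i ∉ A and x_A = (Ψ_AᵗΨ_A)⁻¹(Ψ_Aᵗ y − d_A), and set d_i = Ψ_iᵗ(y − Ψ_A x_A) for i ∉ A. Define the next active set A' = {i : |x_i + d_i| > λ}. Then J_{λ,2} ⊆ A' ⊆ A†. -/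
/-!
With `e = x† - x`, which vanishes off `A†`, the defining equations of `x` and `d` say exactly
that `d = ΨᵀΨe`, so polarizing the RIP gives `|d_i - e_i| ≤ δ‖e‖` for every `i`. Hence
`|e_i| ≤ λ + δ‖e‖` on `A`, while `|e_i| = |x†_i| < 2λ` on `A† \ A` because `J_{λ,2} ⊆ A`; so
`‖e‖ ≤ √T (2λ + δ‖e‖)`, and Assumption 1 turns this into `δ‖e‖ < λ`. Thus every coordinate of
`x + d = x† + (d - e)` lies within `λ` of `x†`, which gives both inclusions.
-/

open Matrix

lemma colSub_mulVec_restrict {n p : ℕ} (Ψ : Matrix (Fin n) (Fin p) ℝ) {A : Finset (Fin p)}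
    {w : Fin p → ℝ} (hw : ∀ i ∉ A, w i = 0) :
    colSub Ψ A *ᵥ (fun j => w j.1) = Ψ *ᵥ w := by
  ext r
  simp only [mulVec, dotProduct, colSub, of_apply]
  rw [← Finset.sum_subset A.subset_univ fun i _ hi => by simp [hw i hi],
    ← Finset.sum_attach A, Finset.univ_eq_attach]

namespace HasRIP

variable {n p k : ℕ} {Ψ : Matrix (Fin n) (Fin p) ℝ} {δ : ℝ}

lemma bounds_of_vanishing_outside (hΨ : HasRIP Ψ k δ) {S : Finset (Fin p)} (hS : S.card ≤ k)
    {x : Fin p → ℝ} (hx : ∀ i ∉ S, x i = 0) :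
    (1 - δ) * (x ⬝ᵥ x) ≤ (Ψ *ᵥ x) ⬝ᵥ (Ψ *ᵥ x) ∧
      (Ψ *ᵥ x) ⬝ᵥ (Ψ *ᵥ x) ≤ (1 + δ) * (x ⬝ᵥ x) := by
  have hsupp : (Finset.univ.filter fun i => x i ≠ 0).card ≤ k := by
    refine (Finset.card_le_card fun i hi => ?_).trans hS
    by_contra hiS
    exact (Finset.mem_filter.mp hi).2 (hx i hiS)
  simpa only [dotProduct, sq] using hΨ x hsupp

lemma abs_dotProduct_mulVec_sub_le (hΨ : HasRIP Ψ k δ) {S : Finset (Fin p)} (hS : S.card ≤ k)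
    {u w : Fin p → ℝ} (hu : ∀ i ∉ S, u i = 0) (hw : ∀ i ∉ S, w i = 0) :
    |(Ψ *ᵥ u) ⬝ᵥ (Ψ *ᵥ w) - u ⬝ᵥ w| ≤ δ * (√(u ⬝ᵥ u) * √(w ⬝ᵥ w)) := by
  set a := √(u ⬝ᵥ u)
  set b := √(w ⬝ᵥ w)
  have ha : a ^ 2 = u ⬝ᵥ u := Real.sq_sqrt (dotProduct_self_star_nonneg u)
  have hb : b ^ 2 = w ⬝ᵥ w := Real.sq_sqrt (dotProduct_self_star_nonneg w)
  rcases (mul_nonneg (Real.sqrt_nonneg _) (Real.sqrt_nonneg _) : 0 ≤ a * b).eq_or_lt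
    with hab | hab
  · rw [← hab, mul_zero]
    rcases mul_eq_zero.mp hab.symm with h | h
    · have : u = 0 := dotProduct_self_eq_zero.mp (by rw [← ha, h]; ring)
      simp [this]
    · have : w = 0 := dotProduct_self_eq_zero.mp (by rw [← hb, h]; ring)
      simp [this]
  -- Polarize with `b • u ± a • w`, whose squared norms are `2a²b² ± 2ab⟪u, w⟫`.
  have hvan (s : ℝ) : ∀ i ∉ S, (b • u + s • w) i = 0 := fun i hi => by simp [hu i hi, hw i hi]
  have hplus := hΨ.bounds_of_vanishing_outside hS (hvan a)
  have hminus := hΨ.bounds_of_vanishing_outside hS (hvan (-a))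
  simp only [mulVec_add, mulVec_smul, add_dotProduct, dotProduct_add, smul_dotProduct,
    dotProduct_smul, smul_eq_mul, dotProduct_comm w u, dotProduct_comm (Ψ *ᵥ w) (Ψ *ᵥ u),
    ← ha, ← hb] at hplus hminus
  rw [abs_sub_le_iff]
  constructor <;> nlinarith

lemma abs_transpose_mulVec_mulVec_sub_le (hΨ : HasRIP Ψ k δ) {S : Finset (Fin p)}
    (hS : S.card + 1 ≤ k) {e : Fin p → ℝ} (he : ∀ i ∉ S, e i = 0) (i : Fin p) :
    |(Ψᵀ *ᵥ (Ψ *ᵥ e)) i - e i| ≤ δ * √(e ⬝ᵥ e) := by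
  have hsingle : ∀ j ∉ insert i S, (Pi.single i 1 : Fin p → ℝ) j = 0 := fun j hj =>
    Pi.single_eq_of_ne (Finset.mem_insert.not.mp hj |> not_or.mp).1 _
  have := hΨ.abs_dotProduct_mulVec_sub_le ((S.card_insert_le i).trans hS) hsingle
    (fun j hj => he j (Finset.notMem_mono (Finset.subset_insert i S) hj))
  have hcol : (Ψᵀ *ᵥ (Ψ *ᵥ e)) i = (Ψ *ᵥ Pi.single i 1) ⬝ᵥ (Ψ *ᵥ e) := by
    rw [mulVec_single_one]; rfl
  simpa [hcol, single_dotProduct] using this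

lemma isUnit_gram (hΨ : HasRIP Ψ k δ) (hδ : δ < 1) {A : Finset (Fin p)} (hA : A.card ≤ k) :
    IsUnit ((colSub Ψ A)ᵀ * colSub Ψ A) := by
  rw [isUnit_iff_isUnit_det, isUnit_iff_ne_zero, Ne, ← exists_mulVec_eq_zero_iff]
  rintro ⟨v, hv0, hv⟩
  set w : Fin p → ℝ := fun i => if h : i ∈ A then v ⟨i, h⟩ else 0
  have hwA : ∀ i ∉ A, w i = 0 := fun i hi => dif_neg hi
  have hwv : (fun j : {i // i ∈ A} => w j.1) = v := funext fun j => dif_pos j.2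
  have hΨw : (Ψ *ᵥ w) ⬝ᵥ (Ψ *ᵥ w) = 0 := by
    rw [← colSub_mulVec_restrict Ψ hwA, hwv, dotProduct_mulVec, ← vecMul_transpose,
      vecMul_vecMul, ← dotProduct_mulVec, hv, dotProduct_zero]
  have hw : w ⬝ᵥ w = 0 := by
    have := (hΨ.bounds_of_vanishing_outside hA hwA).1
    have hwnn : 0 ≤ w ⬝ᵥ w := Finset.sum_nonneg fun i _ => mul_self_nonneg (w i)
    nlinarith
  exact hv0 (hwv ▸ by rw [dotProduct_self_eq_zero.mp hw]; rfl)

end HasRIP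

lemma eq_transpose_mulVec_residual {n p : ℕ} {Ψ : Matrix (Fin n) (Fin p) ℝ}
    {A : Finset (Fin p)} {y : Fin n → ℝ} {d x : Fin p → ℝ}
    (hG : IsUnit ((colSub Ψ A)ᵀ * colSub Ψ A)) (hxI : ∀ i ∉ A, x i = 0)
    (hxA : (fun j : {i // i ∈ A} => x j.1) =
      ((colSub Ψ A)ᵀ * colSub Ψ A)⁻¹ *ᵥ ((colSub Ψ A)ᵀ *ᵥ y - fun j => d j.1))
    (hdI : ∀ i ∉ A, d i = (Ψᵀ *ᵥ (y - colSub Ψ A *ᵥ fun j => x j.1)) i) :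
    d = Ψᵀ *ᵥ (y - Ψ *ᵥ x) := by
  have hnormal : (colSub Ψ A)ᵀ *ᵥ (colSub Ψ A *ᵥ fun j => x j.1) =
      (colSub Ψ A)ᵀ *ᵥ y - fun j => d j.1 := by
    rw [hxA, mulVec_mulVec, mulVec_mulVec, mul_nonsing_inv _ (hG.map detMonoidHom), one_mulVec]
  rw [colSub_mulVec_restrict Ψ hxI] at hdI hnormal
  have hcol (v : Fin n → ℝ) (i : {i // i ∈ A}) : ((colSub Ψ A)ᵀ *ᵥ v) i = (Ψᵀ *ᵥ v) i := rfl
  ext i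
  by_cases hi : i ∈ A
  · have := congrFun hnormal ⟨i, hi⟩
    simp only [Pi.sub_apply, hcol] at this
    rw [mulVec_sub, Pi.sub_apply]
    linarith
  · exact hdI i hi

lemma sqrt_dotProduct_self_le {p : ℕ} {S : Finset (Fin p)} {e : Fin p → ℝ} {c : ℝ}
    (he : ∀ i ∉ S, e i = 0) (hc : ∀ i ∈ S, |e i| ≤ c) (hc0 : 0 ≤ c) :
    √(e ⬝ᵥ e) ≤ √S.card * c := by
  have hsum : e ⬝ᵥ e ≤ S.card * c ^ 2 := by
    calc e ⬝ᵥ e = ∑ i ∈ S, e i * e i :=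
          (Finset.sum_subset S.subset_univ fun i _ hi => by simp [he i hi]).symm
      _ ≤ ∑ _i ∈ S, c ^ 2 := Finset.sum_le_sum fun i hi => by
          rw [← sq, ← sq_abs]; exact pow_le_pow_left₀ (abs_nonneg _) (hc i hi) 2
      _ = S.card * c ^ 2 := by rw [Finset.sum_const, nsmul_eq_mul]
  calc √(e ⬝ᵥ e) ≤ √(S.card * c ^ 2) := Real.sqrt_le_sqrt hsum
    _ = √S.card * c := by rw [Real.sqrt_mul (Nat.cast_nonneg _), Real.sqrt_sq hc0]

lemma mul_lt_of_le_mul_add_mul_self {δ s lam N : ℝ} (hδ : 0 ≤ δ) (hlam : 0 < lam)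
    (hδs : δ * (4 * s + 1) ≤ 1) (hN : N ≤ s * (2 * lam + δ * N)) :
    δ * N < lam := by
  nlinarith [mul_le_mul_of_nonneg_left hN hδ]

/-- Claim 1a: if `J_{λ,2} ⊆ A ⊆ A†`, then the next active set `A'` of the
PDAS step satisfies `J_{λ,2} ⊆ A' ⊆ A†`. -/
theorem stmt_14 {n p : ℕ} (Ψ : Matrix (Fin n) (Fin p) ℝ)
    (xdag : Fin p → ℝ) (Adag : Finset (Fin p))
    (hAdag : Adag = Finset.univ.filter (fun i => xdag i ≠ 0))
    (T : ℕ) (hT : T = Adag.card)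
    (y : Fin n → ℝ) (hy : y = Ψ *ᵥ xdag)
    (δ : ℝ) (hδ0 : 0 < δ) (hδ1 : δ < 1)
    (hRIP : HasRIP Ψ (T + 1) δ)
    (hAss1 : δ ≤ 1 / (4 * Real.sqrt T + 1))
    (lam : ℝ) (hlam : 0 < lam)
    (A : Finset (Fin p)) (hA : A ⊆ Adag)
    (hJ2 : Finset.univ.filter (fun i => 2 * lam ≤ |xdag i|) ⊆ A)
    (d x : Fin p → ℝ)
    (hdA : ∀ i ∈ A, |d i| = lam)
    (hxI : ∀ i ∉ A, x i = 0)
    (hxA : (fun j : {i // i ∈ A} => x j.1) =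
      ((colSub Ψ A)ᵀ * colSub Ψ A)⁻¹ *ᵥ ((colSub Ψ A)ᵀ *ᵥ y - fun j => d j.1))
    (hdI : ∀ i ∉ A, d i = (Ψᵀ *ᵥ (y - colSub Ψ A *ᵥ fun j => x j.1)) i)
 :
    Finset.univ.filter (fun i => 2 * lam ≤ |xdag i|) ⊆
        Finset.univ.filter (fun i => lam < |x i + d i|) ∧
      Finset.univ.filter (fun i => lam < |x i + d i|) ⊆ Adag := by
  have hG := hRIP.isUnit_gram hδ1 ((hT ▸ Finset.card_le_card hA).trans T.le_succ)
  set e := xdag - x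
  have he : ∀ i ∉ Adag, e i = 0 := fun i hi => by
    have hxdag : xdag i = 0 := by simpa [hAdag] using hi
    simp [e, hxdag, hxI i fun hiA => hi (hA hiA)]
  have hd : d = Ψᵀ *ᵥ (Ψ *ᵥ e) := by
    rw [mulVec_sub, ← hy]; exact eq_transpose_mulVec_residual hG hxI hxA hdI
  set N := √(e ⬝ᵥ e)
  have hclose : ∀ i, |d i - e i| ≤ δ * N := fun i =>
    hd ▸ hRIP.abs_transpose_mulVec_mulVec_sub_le (hT ▸ le_rfl) he i
  have hbound : ∀ i ∈ Adag, |e i| ≤ 2 * lam + δ * N := fun i _ => by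
    by_cases hiA : i ∈ A
    · have : |e i| ≤ |d i| + |d i - e i| := by simpa using abs_sub (d i) (d i - e i)
      linarith [hdA i hiA, hclose i]
    · have hxdag : |xdag i| < 2 * lam := not_le.mp fun h => hiA (hJ2 (by simpa using h))
      have : |e i| = |xdag i| := by simp [e, hxI i hiA]
      linarith [mul_nonneg hδ0.le (Real.sqrt_nonneg (e ⬝ᵥ e))]
  have hN : N ≤ √T * (2 * lam + δ * N) :=
    hT ▸ sqrt_dotProduct_self_le he hbound (by positivity)
  have hδT : δ * (4 * √T + 1) ≤ 1 := (le_div_iff₀ (by positivity)).mp hAss1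
  have hsmall : δ * N < lam := mul_lt_of_le_mul_add_mul_self hδ0.le hlam hδT hN
  have hdev : ∀ i, |(x i + d i) - xdag i| < lam := fun i =>
    (show (x i + d i) - xdag i = d i - e i by simp [e]; ring) ▸ (hclose i).trans_lt hsmall
  constructor
  · intro i hi
    simp only [Finset.mem_filter, Finset.mem_univ, true_and] at hi ⊢
    linarith [abs_sub_abs_le_abs_sub (xdag i) (x i + d i), abs_sub_comm (xdag i) (x i + d i),
      hdev i]
  · intro i hi
    simp only [hAdag, Finset.mem_filter, Finset.mem_univ, true_and] at hi ⊢
    exact fun hxdag => hi.not_ge (by simpa [hxdag] using (hdev i).le)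
end
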